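/- Let d ≥ 1 and let Λ = {Λ_t}_{t ≥ 0} be a dynamical map on M_d(ℂ). If for all states ρ₁, ρ₂ on ℂ^{d+1} ⊗ ℂ^d and all times 0 ≤ s ≤ t one has ‖(I_{d+1} ⊗ Λ_t)(ρ₁ − ρ₂)‖₁ ≤ ‖(I_{d+1} ⊗ Λ_s)(ρ₁ − ρ₂)‖₁, then Λ is divisible: for all 0 ≤ s ≤ t there exists a linear map V_{t,s} : M_d(ℂ) → M_d(ℂ) such that Λ_t = V_{t,s} ∘ Λ_s. -/

import Mathlib

/-!
On Hermitian matrices, `ker Λ_s ⊆ ker Λ_t`: an element `H` of `ker Λ_s` is traceless because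
`Λ_s` preserves the trace, so `H` is a positive multiple of a difference `ρ₁ - ρ₂` of two states.
Against the maximally mixed ancilla state `ω` the ampliations act as
`(I ⊗ Λ)(ω ⊗ (ρ₁ - ρ₂)) = ω ⊗ Λ(ρ₁ - ρ₂)`, so monotonicity of the trace norm forces `Λ_t H = 0`.
A positive map commutes with the adjoint, so the inclusion passes to real and imaginary parts and
hence to all matrices; a linear map whose kernel contains `ker Λ_s` factors through `Λ_s`.
-/

open Matrix Kronecker
open scoped ComplexOrder

/-- The trace norm of a complex matrix: the trace of the positive semidefinite
square root of `Aᴴ * A`. -/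
noncomputable def traceNorm {n : Type*} [Fintype n] [DecidableEq n]
    (A : Matrix n n ℂ) : ℝ :=
  (((Matrix.posSemidef_conjTranspose_mul_self A).1.eigenvectorUnitary : Matrix n n ℂ) *
      diagonal ((fun x : ℝ => (x : ℂ)) ∘ Real.sqrt ∘ (Matrix.posSemidef_conjTranspose_mul_self A).1.eigenvalues) *
      (star (Matrix.posSemidef_conjTranspose_mul_self A).1.eigenvectorUnitary : Matrix n n ℂ)).trace.re

/-- A state: a positive semidefinite matrix of trace one. -/
def IsState {n : Type*} [Fintype n] [DecidableEq n] (ρ : Matrix n n ℂ) : Prop :=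
  ρ.PosSemidef ∧ ρ.trace = 1

/-- A trace-preserving linear map on matrices. -/
def TracePreserving {d : ℕ} (Φ : Matrix (Fin d) (Fin d) ℂ →ₗ[ℂ] Matrix (Fin d) (Fin d) ℂ) : Prop :=
  ∀ A, (Φ A).trace = A.trace

/-- A Hermiticity-preserving linear map on matrices. -/
def HermPreserving {d : ℕ} (Φ : Matrix (Fin d) (Fin d) ℂ →ₗ[ℂ] Matrix (Fin d) (Fin d) ℂ) : Prop :=
  ∀ A, Φ Aᴴ = (Φ A)ᴴ

/-- The ampliation `I_n ⊗ Φ` of a linear map `Φ` on `d × d` matrices, acting blockwise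
on `n × n` block matrices with `d × d` blocks. -/
def ampliation {n d : ℕ} (Φ : Matrix (Fin d) (Fin d) ℂ →ₗ[ℂ] Matrix (Fin d) (Fin d) ℂ)
    (A : Matrix (Fin n × Fin d) (Fin n × Fin d) ℂ) :
    Matrix (Fin n × Fin d) (Fin n × Fin d) ℂ :=
  Matrix.of fun p q => Φ (Matrix.of fun i j => A (p.1, i) (q.1, j)) p.2 q.2

/-- A positive map: maps positive semidefinite matrices to positive semidefinite matrices. -/
def PositiveMap {d : ℕ} (Φ : Matrix (Fin d) (Fin d) ℂ →ₗ[ℂ] Matrix (Fin d) (Fin d) ℂ) : Prop :=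
  ∀ A, A.PosSemidef → (Φ A).PosSemidef

/-- A completely positive map: every ampliation `I_n ⊗ Φ` is a positive map. -/
def CompletelyPositive {d : ℕ}
    (Φ : Matrix (Fin d) (Fin d) ℂ →ₗ[ℂ] Matrix (Fin d) (Fin d) ℂ) : Prop :=
  ∀ n : ℕ, 1 ≤ n → ∀ A : Matrix (Fin n × Fin d) (Fin n × Fin d) ℂ,
    A.PosSemidef → (ampliation Φ A).PosSemidef

/-- A separable state on `ℂ^m ⊗ ℂ^d`: a finite convex combination of product states. -/
def SeparableState {m d : ℕ} (ρ : Matrix (Fin m × Fin d) (Fin m × Fin d) ℂ) : Prop :=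
  ∃ (k : ℕ) (w : Fin k → ℝ) (σ : Fin k → Matrix (Fin m) (Fin m) ℂ)
    (τ : Fin k → Matrix (Fin d) (Fin d) ℂ),
    (∀ i, 0 ≤ w i) ∧ (∑ i, w i) = 1 ∧ (∀ i, IsState (σ i)) ∧ (∀ i, IsState (τ i)) ∧
    ρ = ∑ i, (w i : ℂ) • (σ i ⊗ₖ τ i)

section TraceNorm

variable {n : Type*} [Fintype n] [DecidableEq n]

lemma traceNorm_eq_sum_sqrt_eigenvalues (A : Matrix n n ℂ) :
    traceNorm A = ∑ i, √((posSemidef_conjTranspose_mul_self A).1.eigenvalues i) := by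
  rw [traceNorm, trace_mul_comm, ← Matrix.mul_assoc, UnitaryGroup.star_mul_self, Matrix.one_mul,
    trace_diagonal, Complex.re_sum]
  simp

lemma traceNorm_nonneg (A : Matrix n n ℂ) : 0 ≤ traceNorm A := by
  rw [traceNorm_eq_sum_sqrt_eigenvalues]
  exact Finset.sum_nonneg fun i _ => Real.sqrt_nonneg _

lemma traceNorm_eq_zero_iff {A : Matrix n n ℂ} : traceNorm A = 0 ↔ A = 0 := by
  have hA := posSemidef_conjTranspose_mul_self A
  rw [traceNorm_eq_sum_sqrt_eigenvalues,
    Finset.sum_eq_zero_iff_of_nonneg fun i _ => Real.sqrt_nonneg _]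
  simp only [Finset.mem_univ, true_implies, Real.sqrt_eq_zero (hA.eigenvalues_nonneg _)]
  rw [← conjTranspose_mul_self_eq_zero, ← hA.1.eigenvalues_eq_zero_iff, funext_iff]
  rfl

end TraceNorm

section States

variable {m n : Type*} [Fintype m] [DecidableEq m] [Fintype n] [DecidableEq n]

open scoped Matrix.Norms.L2Operator MatrixOrder in
lemma Matrix.IsHermitian.exists_posSemidef_add_smul_one {H : Matrix n n ℂ} (hH : H.IsHermitian) :
    ∃ r : ℝ, 0 < r ∧ (H + (r : ℂ) • 1).PosSemidef := by
  refine ⟨‖H‖ + 1, by positivity, ?_⟩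
  have hshift : (H + (‖H‖ : ℂ) • 1).PosSemidef := by
    have h := IsSelfAdjoint.neg_algebraMap_norm_le_self hH
    rw [Algebra.algebraMap_eq_smul_one, ← Complex.coe_smul, neg_le_iff_add_nonneg] at h
    exact nonneg_iff_posSemidef.1 h
  rw [Complex.ofReal_add, Complex.ofReal_one, add_smul, one_smul, ← add_assoc]
  exact hshift.add PosSemidef.one

lemma isState_inv_card_smul_one [Nonempty n] :
    IsState ((Fintype.card n : ℂ)⁻¹ • (1 : Matrix n n ℂ)) := by
  refine ⟨PosSemidef.one.smul (by positivity), ?_⟩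
  rw [trace_smul, trace_one, smul_eq_mul, inv_mul_cancel₀ (by simp)]

lemma IsState.kronecker {ρ : Matrix m m ℂ} {σ : Matrix n n ℂ} (hρ : IsState ρ) (hσ : IsState σ) :
    IsState (ρ ⊗ₖ σ) :=
  ⟨hρ.1.kronecker hσ.1, by rw [trace_kronecker, hρ.2, hσ.2, one_mul]⟩

lemma Matrix.IsHermitian.exists_isState_sub_eq_smul [Nonempty n] {H : Matrix n n ℂ}
    (hH : H.IsHermitian) (htr : H.trace = 0) :
    ∃ ρ₁ ρ₂ : Matrix n n ℂ, IsState ρ₁ ∧ IsState ρ₂ ∧ ∃ c : ℝ, 0 < c ∧ ρ₁ - ρ₂ = (c : ℂ) • H := by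
  obtain ⟨r, hr, hP⟩ := hH.exists_posSemidef_add_smul_one
  have hN : (Fintype.card n : ℂ) ≠ 0 := by simp
  refine ⟨((r : ℂ) * Fintype.card n)⁻¹ • (H + (r : ℂ) • 1), (Fintype.card n : ℂ)⁻¹ • 1,
    ⟨hP.smul (by positivity), ?_⟩, isState_inv_card_smul_one, (r * Fintype.card n)⁻¹,
    by positivity, ?_⟩
  · rw [trace_smul, trace_add, htr, trace_smul, trace_one, smul_eq_mul, smul_eq_mul, zero_add]
    field_simp
  · rw [smul_add, smul_smul, add_sub_assoc, ← sub_smul]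
    push_cast
    field_simp
    simp

end States

section StarModule

open ComplexStarModule

variable {E F G : Type*} [AddCommGroup E] [Module ℂ E] [StarAddMonoid E] [StarModule ℂ E]
  [AddCommGroup F] [Module ℂ F] [StarAddMonoid F] [AddCommGroup G] [Module ℂ G]

lemma star_eq_realPart_sub_I_smul_imaginaryPart (a : E) :
    star a = (ℜ a : E) - Complex.I • (ℑ a : E) := by
  conv_lhs => rw [← realPart_add_I_smul_imaginaryPart a]
  rw [star_add, star_smul, (ℜ a).2.star_eq, (ℑ a).2.star_eq, Complex.star_def, Complex.conj_I,
    neg_smul, sub_eq_add_neg]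

lemma LinearMap.ker_le_ker_of_isSelfAdjoint {f : E →ₗ[ℂ] F} {g : E →ₗ[ℂ] G}
    (hf : ∀ a, f (star a) = star (f a)) (hfg : ∀ a, IsSelfAdjoint a → f a = 0 → g a = 0) :
    LinearMap.ker f ≤ LinearMap.ker g := by
  intro a ha
  rw [LinearMap.mem_ker] at ha ⊢
  have ha' : f (star a) = 0 := by rw [hf, ha, star_zero]
  have hre : f (ℜ a) = 0 := by
    rw [realPart_apply_coe, LinearMap.map_smul_of_tower, map_add, ha, ha', add_zero, smul_zero]
  have him : f (ℑ a) = 0 := by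
    rw [imaginaryPart_apply_coe, map_smul, LinearMap.map_smul_of_tower, map_sub, ha, ha',
      sub_zero, smul_zero, smul_zero]
  rw [← realPart_add_I_smul_imaginaryPart a, map_add, map_smul, hfg _ (ℜ a).2 hre,
    hfg _ (ℑ a).2 him, smul_zero, add_zero]

variable [StarModule ℂ F]

lemma LinearMap.map_star_of_isSelfAdjoint (f : E →ₗ[ℂ] F)
    (hf : ∀ a, IsSelfAdjoint a → IsSelfAdjoint (f a)) (a : E) : f (star a) = star (f a) := by
  rw [star_eq_realPart_sub_I_smul_imaginaryPart, map_sub, map_smul]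
  conv_rhs => rw [← realPart_add_I_smul_imaginaryPart a]
  rw [map_add, map_smul, star_add, star_smul, (hf _ (ℜ a).2).star_eq, (hf _ (ℑ a).2).star_eq,
    Complex.star_def, Complex.conj_I, neg_smul, sub_eq_add_neg]

end StarModule

lemma LinearMap.exists_eq_comp_of_ker_le {K V W U : Type*} [Field K] [AddCommGroup V] [Module K V]
    [AddCommGroup W] [Module K W] [AddCommGroup U] [Module K U] (f : V →ₗ[K] W) (g : V →ₗ[K] U)
    (h : LinearMap.ker f ≤ LinearMap.ker g) : ∃ φ : W →ₗ[K] U, g = φ ∘ₗ f := by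
  obtain ⟨L, hL⟩ := ((LinearMap.ker f).liftQ f le_rfl).exists_leftInverse_of_injective
    (Submodule.ker_liftQ_eq_bot _ _ _ le_rfl)
  refine ⟨(LinearMap.ker f).liftQ g h ∘ₗ L, LinearMap.ext fun x => ?_⟩
  have hx := LinearMap.congr_fun hL ((LinearMap.ker f).mkQ x)
  simp only [LinearMap.comp_apply, Submodule.mkQ_apply, Submodule.liftQ_apply,
    LinearMap.id_apply] at hx ⊢
  rw [hx, Submodule.liftQ_apply]

lemma Matrix.eq_zero_of_kronecker_eq_zero {l m n p α : Type*} [MulZeroClass α] [NoZeroDivisors α]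
    {A : Matrix l m α} {B : Matrix n p α} (hA : A ≠ 0) (h : A ⊗ₖ B = 0) : B = 0 := by
  obtain ⟨i, j, hij⟩ : ∃ i j, A i j ≠ 0 := by simpa [← Matrix.ext_iff] using hA
  ext k l
  simpa [hij] using congr_fun₂ h (i, k) (j, l)

section Ampliation

variable {d : ℕ} {Φ Ψ : Matrix (Fin d) (Fin d) ℂ →ₗ[ℂ] Matrix (Fin d) (Fin d) ℂ}

lemma ampliation_kronecker {n : ℕ} (Φ : Matrix (Fin d) (Fin d) ℂ →ₗ[ℂ] Matrix (Fin d) (Fin d) ℂ)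
    (A : Matrix (Fin n) (Fin n) ℂ) (B : Matrix (Fin d) (Fin d) ℂ) :
    ampliation Φ (A ⊗ₖ B) = A ⊗ₖ Φ B := by
  ext ⟨i, k⟩ ⟨j, l⟩
  have hblock : (of fun k l => (A ⊗ₖ B) (i, k) (j, l)) = A i j • B := by
    ext k l
    simp
  rw [ampliation, of_apply, hblock, map_smul]
  rfl

lemma CompletelyPositive.positiveMap (hΦ : CompletelyPositive Φ) : PositiveMap Φ := by
  intro A hA
  have h := hΦ 1 le_rfl _ (PosSemidef.one.kronecker hA)
  rw [ampliation_kronecker] at h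
  convert h.submatrix fun i => ((0 : Fin 1), i)
  ext i j
  simp

lemma PositiveMap.isHermitian_map (hΦ : PositiveMap Φ) {H : Matrix (Fin d) (Fin d) ℂ}
    (hH : H.IsHermitian) : (Φ H).IsHermitian := by
  obtain ⟨r, hr, hP⟩ := hH.exists_posSemidef_add_smul_one
  have hr1 : ((r : ℂ) • (1 : Matrix (Fin d) (Fin d) ℂ)).PosSemidef :=
    PosSemidef.one.smul (by exact_mod_cast hr.le)
  simpa using (hΦ _ hP).isHermitian.sub (hΦ _ hr1).isHermitian

lemma PositiveMap.hermPreserving (hΦ : PositiveMap Φ) : HermPreserving Φ :=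
  Φ.map_star_of_isSelfAdjoint fun _ => hΦ.isHermitian_map

lemma TracePreserving.map_eq_zero_of_traceNorm_ampliation_le {m : ℕ} [NeZero m]
    (hΦ : TracePreserving Φ)
    (hΨΦ : ∀ ρ₁ ρ₂ : Matrix (Fin m × Fin d) (Fin m × Fin d) ℂ, IsState ρ₁ → IsState ρ₂ →
      traceNorm (ampliation Ψ (ρ₁ - ρ₂)) ≤ traceNorm (ampliation Φ (ρ₁ - ρ₂)))
    {H : Matrix (Fin d) (Fin d) ℂ} (hH : H.IsHermitian) (hΦH : Φ H = 0) : Ψ H = 0 := by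
  cases isEmpty_or_nonempty (Fin d)
  · exact Subsingleton.elim _ _
  have htr : H.trace = 0 := by rw [← hΦ, hΦH, trace_zero]
  obtain ⟨ρ₁, ρ₂, hρ₁, hρ₂, c, hc, hρ⟩ := hH.exists_isState_sub_eq_smul htr
  set ω : Matrix (Fin m) (Fin m) ℂ := (Fintype.card (Fin m) : ℂ)⁻¹ • 1
  have hω : IsState ω := isState_inv_card_smul_one
  have hdiff : ω ⊗ₖ ρ₁ - ω ⊗ₖ ρ₂ = ω ⊗ₖ ((c : ℂ) • H) := by
    rw [← hρ]
    ext
    simp [mul_sub]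
  have hle := hΨΦ _ _ (hω.kronecker hρ₁) (hω.kronecker hρ₂)
  rw [hdiff, ampliation_kronecker, ampliation_kronecker, map_smul, map_smul, hΦH, smul_zero,
    kronecker_zero, traceNorm_eq_zero_iff.2 rfl] at hle
  have hω0 : ω ≠ 0 := fun h0 => by simpa [h0] using hω.2
  have h0 := eq_zero_of_kronecker_eq_zero hω0
    (traceNorm_eq_zero_iff.1 (le_antisymm hle (traceNorm_nonneg _)))
  exact (smul_eq_zero.1 h0).resolve_left (by exact_mod_cast hc.ne')

end Ampliation

theorem nonincreasing_distinguishability_implies_divisible_general (d : ℕ)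
    (Λ : ℝ → (Matrix (Fin d) (Fin d) ℂ →ₗ[ℂ] Matrix (Fin d) (Fin d) ℂ))
    (hTP : ∀ t : ℝ, 0 ≤ t → TracePreserving (Λ t))
    (hCP : ∀ t : ℝ, 0 ≤ t → CompletelyPositive (Λ t))
    (h : ∀ ρ₁ ρ₂ : Matrix (Fin (d+1) × Fin d) (Fin (d+1) × Fin d) ℂ,
      IsState ρ₁ → IsState ρ₂ → ∀ s t : ℝ, 0 ≤ s → s ≤ t →
        traceNorm (ampliation (Λ t) (ρ₁ - ρ₂)) ≤ traceNorm (ampliation (Λ s) (ρ₁ - ρ₂))) :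
    ∀ s t : ℝ, 0 ≤ s → s ≤ t →
      ∃ V : Matrix (Fin d) (Fin d) ℂ →ₗ[ℂ] Matrix (Fin d) (Fin d) ℂ, Λ t = V ∘ₗ Λ s := by
  intro s t hs hst
  apply LinearMap.exists_eq_comp_of_ker_le
  refine LinearMap.ker_le_ker_of_isSelfAdjoint (hCP s hs).positiveMap.hermPreserving
    fun H hH => ?_
  exact (hTP s hs).map_eq_zero_of_traceNorm_ampliation_le
    (fun ρ₁ ρ₂ h₁ h₂ => h ρ₁ ρ₂ h₁ h₂ s t hs hst) hH

/-- If the distinguishability of states of system and a `(d+1)`-dimensional ancilla never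
increases, then the dynamical map is divisible into a sequence of linear maps. -/
theorem nonincreasing_distinguishability_implies_divisible (d : ℕ) (hd : 1 ≤ d)
    (Λ : ℝ → (Matrix (Fin d) (Fin d) ℂ →ₗ[ℂ] Matrix (Fin d) (Fin d) ℂ))
    (hTP : ∀ t : ℝ, 0 ≤ t → TracePreserving (Λ t))
    (hCP : ∀ t : ℝ, 0 ≤ t → CompletelyPositive (Λ t))
    (hΛ0 : Λ 0 = LinearMap.id)
    (h : ∀ ρ₁ ρ₂ : Matrix (Fin (d+1) × Fin d) (Fin (d+1) × Fin d) ℂ,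
      IsState ρ₁ → IsState ρ₂ → ∀ s t : ℝ, 0 ≤ s → s ≤ t →
        traceNorm (ampliation (Λ t) (ρ₁ - ρ₂)) ≤ traceNorm (ampliation (Λ s) (ρ₁ - ρ₂))) :
    ∀ s t : ℝ, 0 ≤ s → s ≤ t →
      ∃ V : Matrix (Fin d) (Fin d) ℂ →ₗ[ℂ] Matrix (Fin d) (Fin d) ℂ, Λ t = V ∘ₗ Λ s :=
  nonincreasing_distinguishability_implies_divisible_general d Λ hTP hCP h
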